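/- Let $n\geq 3$ and define on $\Omega=\{x\in\mathbb{R}^n : 0<|x|\leq e^{-2}\}$ the map $u_1(x)=\sin((2-n)\log|x|)$, $u_2(x)=\cos((2-n)\log|x|)$. Then $u=(u_1,u_2)$ is smooth on $\Omega$ and satisfies pointwise on $\Omega$ the system $\Delta u_1 = -\frac{2(u_1+u_2)}{1+|u|^2}|\nabla u|^2$ and $\Delta u_2 = -\frac{2(u_2-u_1)}{1+|u|^2}|\nabla u|^2$. -/

import Mathlib

open MeasureTheory

/-- The `i`-th partial derivative of `u : ℝⁿ → ℝ`. -/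
noncomputable def pd (n : ℕ) (u : EuclideanSpace ℝ (Fin n) → ℝ) (i : Fin n)
    (x : EuclideanSpace ℝ (Fin n)) : ℝ :=
  fderiv ℝ u x (EuclideanSpace.single i 1)

/-- The Euclidean Laplacian of `u : ℝⁿ → ℝ`. -/
noncomputable def lap (n : ℕ) (u : EuclideanSpace ℝ (Fin n) → ℝ)
    (x : EuclideanSpace ℝ (Fin n)) : ℝ :=
  ∑ i : Fin n, pd n (pd n u i) i x

/-- `|∇u|²` for a map `u = (u₁, u₂) : ℝⁿ → ℝ²`. -/
noncomputable def gradSq (n : ℕ) (u₁ u₂ : EuclideanSpace ℝ (Fin n) → ℝ)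
    (x : EuclideanSpace ℝ (Fin n)) : ℝ :=
  ∑ i : Fin n, ((pd n u₁ i x) ^ 2 + (pd n u₂ i x) ^ 2)

namespace Stmt8Aux
variable {n : ℕ}

theorem hasFDerivAt_logNorm (x : EuclideanSpace ℝ (Fin n)) (hx : x ≠ 0) :
    HasFDerivAt (fun y : EuclideanSpace ℝ (Fin n) => Real.log ‖y‖)
      ((‖x‖^2)⁻¹ • (innerSL ℝ x)) x := by
  have hs : (‖x‖:ℝ)^2 ≠ 0 := pow_ne_zero 2 (norm_ne_zero_iff.2 hx)
  have h1 : HasFDerivAt (fun y : EuclideanSpace ℝ (Fin n) => ‖y‖^2) (2 • (innerSL ℝ x)) x :=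
    (hasStrictFDerivAt_norm_sq x).hasFDerivAt
  have h2 : HasDerivAt Real.log (‖x‖^2)⁻¹ (‖x‖^2) := Real.hasDerivAt_log hs
  have h4 := (h2.comp_hasFDerivAt x h1).const_mul (2⁻¹ : ℝ)
  have heq : (fun y : EuclideanSpace ℝ (Fin n) =>
        (2⁻¹:ℝ) * (Real.log ∘ fun y : EuclideanSpace ℝ (Fin n) => ‖y‖^2) y)
      = fun y : EuclideanSpace ℝ (Fin n) => Real.log ‖y‖ := by
    funext y
    show (2⁻¹:ℝ) * Real.log (‖y‖^2) = _
    rw [show (‖y‖^2 : ℝ) = ‖y‖^(2:ℕ) by norm_num, Real.log_pow]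
    push_cast; ring
  rw [heq] at h4
  refine h4.congr_fderiv ?_
  ext y; simp; ring

theorem radial_deriv (f : ℝ → ℝ) (f' : ℝ) (x : EuclideanSpace ℝ (Fin n)) (hx : x ≠ 0)
    (hf : HasDerivAt f f' (Real.log ‖x‖)) :
    HasFDerivAt (fun y : EuclideanSpace ℝ (Fin n) => f (Real.log ‖y‖))
      ((f' * (‖x‖^2)⁻¹) • innerSL ℝ x) x := by
  have h := hf.comp_hasFDerivAt x (hasFDerivAt_logNorm x hx)
  refine h.congr_fderiv ?_
  ext y; simp; ring

theorem apply_single (r : ℝ) (x : EuclideanSpace ℝ (Fin n)) (i : Fin n) :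
    (r • innerSL ℝ x) (EuclideanSpace.single i 1) = r * x i := by
  simp [EuclideanSpace.inner_single_right]

theorem pd_radial (f f' : ℝ → ℝ) (hf : ∀ t, HasDerivAt f (f' t) t)
    (x : EuclideanSpace ℝ (Fin n)) (hx : x ≠ 0) (i : Fin n) :
    pd n (fun y => f (Real.log ‖y‖)) i x = f' (Real.log ‖x‖) * (‖x‖^2)⁻¹ * x i := by
  have h := radial_deriv f (f' (Real.log ‖x‖)) x hx (hf _)
  rw [pd, h.fderiv, apply_single]

theorem sum_sq (x : EuclideanSpace ℝ (Fin n)) : ∑ i, (x i)^2 = ‖x‖^2 := by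
  rw [EuclideanSpace.norm_eq, Real.sq_sqrt (by positivity)]
  simp [Real.norm_eq_abs, sq_abs]

theorem pd2_radial (f f' f'' : ℝ → ℝ) (hf : ∀ t, HasDerivAt f (f' t) t)
    (hf' : ∀ t, HasDerivAt f' (f'' t) t)
    (x : EuclideanSpace ℝ (Fin n)) (hx : x ≠ 0) (i : Fin n) :
    pd n (pd n (fun y => f (Real.log ‖y‖)) i) i x
      = f' (Real.log ‖x‖) * (‖x‖^2)⁻¹
        + (f'' (Real.log ‖x‖) - 2 * f' (Real.log ‖x‖)) * ((‖x‖^2)^2)⁻¹ * (x i)^2 := by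
  have hs : (‖x‖:ℝ)^2 ≠ 0 := pow_ne_zero 2 (norm_ne_zero_iff.2 hx)
  have hmem : {y : EuclideanSpace ℝ (Fin n) | y ≠ 0} ∈ nhds x := isOpen_ne.mem_nhds hx
  have heq : pd n (fun y => f (Real.log ‖y‖)) i
      =ᶠ[nhds x] fun y => f' (Real.log ‖y‖) * (‖y‖^2)⁻¹ * y i :=
    Filter.eventuallyEq_of_mem hmem fun y hy => pd_radial f f' hf y hy i
  have hA : HasFDerivAt (fun y : EuclideanSpace ℝ (Fin n) => f' (Real.log ‖y‖))
      ((f'' (Real.log ‖x‖) * (‖x‖^2)⁻¹) • innerSL ℝ x) x :=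
    radial_deriv f' _ x hx (hf' _)
  have h1 : HasFDerivAt (fun y : EuclideanSpace ℝ (Fin n) => ‖y‖^2) (2 • (innerSL ℝ x)) x :=
    (hasStrictFDerivAt_norm_sq x).hasFDerivAt
  have hB : HasFDerivAt (fun y : EuclideanSpace ℝ (Fin n) => (‖y‖^2)⁻¹)
      ((-((‖x‖^2)^2)⁻¹) • (2 • innerSL ℝ x)) x :=
    (hasDerivAt_inv hs).comp_hasFDerivAt x h1
  have hC : HasFDerivAt (fun y : EuclideanSpace ℝ (Fin n) => y i)
      ((EuclideanSpace.proj i : EuclideanSpace ℝ (Fin n) →L[ℝ] ℝ)) x :=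
    (EuclideanSpace.proj i : EuclideanSpace ℝ (Fin n) →L[ℝ] ℝ).hasFDerivAt.congr_of_eventuallyEq
      (by filter_upwards with y; rfl)
  have hg : HasFDerivAt (fun y : EuclideanSpace ℝ (Fin n) => f' (Real.log ‖y‖) * (‖y‖^2)⁻¹ * y i) _ x :=
    (hA.mul hB).mul hC
  rw [pd, heq.fderiv_eq, hg.fderiv]
  simp [ContinuousLinearMap.add_apply, ContinuousLinearMap.smul_apply,
    EuclideanSpace.inner_single_right]
  ring

theorem lap_radial (f f' f'' : ℝ → ℝ) (hf : ∀ t, HasDerivAt f (f' t) t)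
    (hf' : ∀ t, HasDerivAt f' (f'' t) t)
    (x : EuclideanSpace ℝ (Fin n)) (hx : x ≠ 0) :
    lap n (fun y => f (Real.log ‖y‖)) x
      = (((n:ℝ) - 2) * f' (Real.log ‖x‖) + f'' (Real.log ‖x‖)) * (‖x‖^2)⁻¹ := by
  have hs : (‖x‖:ℝ)^2 ≠ 0 := pow_ne_zero 2 (norm_ne_zero_iff.2 hx)
  rw [lap]
  rw [Finset.sum_congr rfl fun i _ => pd2_radial f f' f'' hf hf' x hx i]
  rw [Finset.sum_add_distrib, Finset.sum_const, ← Finset.mul_sum, sum_sq]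
  simp only [Finset.card_univ, Fintype.card_fin, nsmul_eq_mul]
  field_simp
  ring

theorem hsin1 (a : ℝ) : ∀ t : ℝ, HasDerivAt (fun t => Real.sin (a*t)) (Real.cos (a*t) * a) t := by
  intro t
  simpa [Function.comp_def] using (Real.hasDerivAt_sin (a*t)).comp t ((hasDerivAt_id t).const_mul a)

theorem hsin2 (a : ℝ) : ∀ t : ℝ,
    HasDerivAt (fun t => Real.cos (a*t) * a) (-Real.sin (a*t) * a * a) t := by
  intro t
  simpa using ((Real.hasDerivAt_cos (a*t)).comp t ((hasDerivAt_id t).const_mul a)).mul_const a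

theorem hcos1 (a : ℝ) : ∀ t : ℝ,
    HasDerivAt (fun t => Real.cos (a*t)) (-Real.sin (a*t) * a) t := by
  intro t
  simpa [Function.comp_def] using (Real.hasDerivAt_cos (a*t)).comp t ((hasDerivAt_id t).const_mul a)

theorem hcos2 (a : ℝ) : ∀ t : ℝ,
    HasDerivAt (fun t => -Real.sin (a*t) * a) (-Real.cos (a*t) * a * a) t := by
  intro t
  simpa using (((Real.hasDerivAt_sin (a*t)).comp t ((hasDerivAt_id t).const_mul a)).neg).mul_const a

theorem contDiffOn_radial_sin (a : ℝ) :
    ContDiffOn ℝ (⊤ : ℕ∞) (fun y : EuclideanSpace ℝ (Fin n) => Real.sin (a * Real.log ‖y‖))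
      {y : EuclideanSpace ℝ (Fin n) | y ≠ 0} := by
  intro x hx
  have hnx : ‖x‖ ≠ 0 := norm_ne_zero_iff.2 hx
  have hnorm : ContDiffAt ℝ (⊤ : ℕ∞) (fun y : EuclideanSpace ℝ (Fin n) => ‖y‖) x :=
    contDiffAt_norm (𝕜 := ℝ) hx
  have hlog : ContDiffAt ℝ (⊤ : ℕ∞) (fun y : EuclideanSpace ℝ (Fin n) => Real.log ‖y‖) x :=
    (Real.contDiffAt_log.2 hnx).comp x hnorm
  exact ((Real.contDiff_sin.contDiffAt).comp x (contDiffAt_const.mul hlog)).contDiffWithinAt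

theorem contDiffOn_radial_cos (a : ℝ) :
    ContDiffOn ℝ (⊤ : ℕ∞) (fun y : EuclideanSpace ℝ (Fin n) => Real.cos (a * Real.log ‖y‖))
      {y : EuclideanSpace ℝ (Fin n) | y ≠ 0} := by
  intro x hx
  have hnx : ‖x‖ ≠ 0 := norm_ne_zero_iff.2 hx
  have hnorm : ContDiffAt ℝ (⊤ : ℕ∞) (fun y : EuclideanSpace ℝ (Fin n) => ‖y‖) x :=
    contDiffAt_norm (𝕜 := ℝ) hx
  have hlog : ContDiffAt ℝ (⊤ : ℕ∞) (fun y : EuclideanSpace ℝ (Fin n) => Real.log ‖y‖) x :=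
    (Real.contDiffAt_log.2 hnx).comp x hnorm
  exact ((Real.contDiff_cos.contDiffAt).comp x (contDiffAt_const.mul hlog)).contDiffWithinAt

end Stmt8Aux

theorem stmt8 (n : ℕ) (hn : 3 ≤ n) :
    let u₁ : EuclideanSpace ℝ (Fin n) → ℝ :=
      fun x => Real.sin (((2 : ℝ) - n) * Real.log ‖x‖)
    let u₂ : EuclideanSpace ℝ (Fin n) → ℝ :=
      fun x => Real.cos (((2 : ℝ) - n) * Real.log ‖x‖)
    let Ω : Set (EuclideanSpace ℝ (Fin n)) := {x | 0 < ‖x‖ ∧ ‖x‖ ≤ Real.exp (-2)}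
    ContDiffOn ℝ (⊤ : ℕ∞) u₁ Ω ∧ ContDiffOn ℝ (⊤ : ℕ∞) u₂ Ω ∧
      ∀ x ∈ Ω,
        lap n u₁ x =
          -(2 * (u₁ x + u₂ x) / (1 + ((u₁ x) ^ 2 + (u₂ x) ^ 2))) * gradSq n u₁ u₂ x ∧
        lap n u₂ x =
          -(2 * (u₂ x - u₁ x) / (1 + ((u₁ x) ^ 2 + (u₂ x) ^ 2))) * gradSq n u₁ u₂ x := by
  intro u₁ u₂ Ω
  set a : ℝ := (2 : ℝ) - n with ha
  have hΩ : Ω ⊆ {y : EuclideanSpace ℝ (Fin n) | y ≠ 0} := by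
    intro x hx
    exact norm_pos_iff.1 hx.1
  refine ⟨(Stmt8Aux.contDiffOn_radial_sin a).mono hΩ,
    (Stmt8Aux.contDiffOn_radial_cos a).mono hΩ, ?_⟩
  intro x hx
  have hx0 : x ≠ 0 := norm_pos_iff.1 hx.1
  have hs : (‖x‖:ℝ)^2 ≠ 0 := pow_ne_zero 2 (norm_ne_zero_iff.2 hx0)
  have h1 : lap n u₁ x
      = (((n:ℝ) - 2) * (Real.cos (a * Real.log ‖x‖) * a)
          + (-Real.sin (a * Real.log ‖x‖) * a * a)) * (‖x‖^2)⁻¹ :=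
    Stmt8Aux.lap_radial (fun t => Real.sin (a*t)) (fun t => Real.cos (a*t) * a)
      (fun t => -Real.sin (a*t) * a * a) (Stmt8Aux.hsin1 a) (Stmt8Aux.hsin2 a) x hx0
  have h2 : lap n u₂ x
      = (((n:ℝ) - 2) * (-Real.sin (a * Real.log ‖x‖) * a)
          + (-Real.cos (a * Real.log ‖x‖) * a * a)) * (‖x‖^2)⁻¹ :=
    Stmt8Aux.lap_radial (fun t => Real.cos (a*t)) (fun t => -Real.sin (a*t) * a)
      (fun t => -Real.cos (a*t) * a * a) (Stmt8Aux.hcos1 a) (Stmt8Aux.hcos2 a) x hx0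
  have hp1 : ∀ i, pd n u₁ i x = Real.cos (a * Real.log ‖x‖) * a * (‖x‖^2)⁻¹ * x i :=
    fun i => Stmt8Aux.pd_radial (fun t => Real.sin (a*t)) (fun t => Real.cos (a*t) * a)
      (Stmt8Aux.hsin1 a) x hx0 i
  have hp2 : ∀ i, pd n u₂ i x = -Real.sin (a * Real.log ‖x‖) * a * (‖x‖^2)⁻¹ * x i :=
    fun i => Stmt8Aux.pd_radial (fun t => Real.cos (a*t)) (fun t => -Real.sin (a*t) * a)
      (Stmt8Aux.hcos1 a) x hx0 i
  have hg : gradSq n u₁ u₂ x = a^2 * (‖x‖^2)⁻¹ := by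
    rw [gradSq]
    have : ∀ i : Fin n, (pd n u₁ i x)^2 + (pd n u₂ i x)^2
        = a^2 * ((‖x‖^2)^2)⁻¹ * (x i)^2 := by
      intro i
      rw [hp1 i, hp2 i]
      linear_combination (a^2 * ((‖x‖^2)^2)⁻¹ * (x i)^2) *
        Real.sin_sq_add_cos_sq (a * Real.log ‖x‖)
    rw [Finset.sum_congr rfl fun i _ => this i, ← Finset.mul_sum, Stmt8Aux.sum_sq]
    field_simp
  have hu1 : u₁ x = Real.sin (a * Real.log ‖x‖) := rfl
  have hu2 : u₂ x = Real.cos (a * Real.log ‖x‖) := rfl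
  constructor
  · rw [h1, hg, hu1, hu2]
    have h := Real.sin_sq_add_cos_sq (a * Real.log ‖x‖)
    rw [show (1:ℝ) + (Real.sin (a * Real.log ‖x‖)^2 + Real.cos (a * Real.log ‖x‖)^2)
      = 2 by rw [h]; norm_num]
    field_simp
    ring
  · rw [h2, hg, hu1, hu2]
    have h := Real.sin_sq_add_cos_sq (a * Real.log ‖x‖)
    rw [show (1:ℝ) + (Real.sin (a * Real.log ‖x‖)^2 + Real.cos (a * Real.log ‖x‖)^2)
      = 2 by rw [h]; norm_num]
    field_simp
    ring
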